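/- arXiv:1708.01455 — 2 statements merged into one kernel-verified Lean document; each statement's English description precedes it below -/
import Mathlib

section
/- Let T⁻¹ ∈ ℝ^{n×n} be an invertible matrix, Δ > 0, and ũ ∈ ℝ^n. For each row i, let w_i be the number of nonzero entries of the i-th row of T⁻¹, and for each column j let R_j = {i : T⁻¹_{ij} ≠ 0}. Define a_j = max_{i∈R_j} (−sign(T⁻¹_{ij})·Δ − ũ_i)/(w_i·T⁻¹_{ij}) and b_j = min_{i∈R_j} (sign(T⁻¹_{ij})·Δ − ũ_i)/(w_i·T⁻¹_{ij}). If v ∈ ℝ^n satisfies a_j ≤ v_j ≤ b_j for all j, then ‖ũ + T⁻¹v‖_∞ ≤ Δ. -/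
open Finset

/-!
Row `i` of `T⁻¹ v` is a sum of `w i` nonzero terms `T⁻¹ᵢⱼ vⱼ`. Whichever the sign of `T⁻¹ᵢⱼ`,
the constraints `aⱼ ≤ vⱼ ≤ bⱼ` confine each such term to `[(-Δ - ũᵢ) / wᵢ, (Δ - ũᵢ) / wᵢ]`, so the
sum lies in `[-Δ - ũᵢ, Δ - ũᵢ]` and `|ũᵢ + (T⁻¹ v)ᵢ| ≤ Δ`.
-/

lemma Matrix.mulVec_apply_eq_sum_filter_ne_zero {m n : Type*} [Fintype n]
    (A : Matrix m n ℝ) (v : n → ℝ) (i : m) :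
    A.mulVec v i = ∑ j ∈ univ.filter (fun j => A i j ≠ 0), A i j * v j :=
  (sum_filter_of_ne fun _ _ h => left_ne_zero_of_mul h).symm

lemma sum_mem_Icc_of_forall_mem_Icc_div_card {ι : Type*} {s : Finset ι} (hs : s.Nonempty)
    {x : ι → ℝ} {lo hi : ℝ} (hx : ∀ j ∈ s, x j ∈ Set.Icc (lo / #s) (hi / #s)) :
    ∑ j ∈ s, x j ∈ Set.Icc lo hi := by
  have hcard : (#s : ℝ) ≠ 0 := by exact_mod_cast hs.card_pos.ne'
  have hconst (c : ℝ) : ∑ _j ∈ s, c / #s = c := by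
    rw [sum_const, nsmul_eq_mul, mul_div_cancel₀ _ hcard]
  constructor
  · simpa only [hconst] using sum_le_sum fun j hj => (hx j hj).1
  · simpa only [hconst] using sum_le_sum fun j hj => (hx j hj).2

lemma mul_mem_Icc_of_sign_bounds {t w v c Δ : ℝ} (ht : t ≠ 0) (hw : 0 < w)
    (hlo : (-Real.sign t * Δ - c) / (w * t) ≤ v) (hhi : v ≤ (Real.sign t * Δ - c) / (w * t)) :
    t * v ∈ Set.Icc ((-Δ - c) / w) ((Δ - c) / w) := by
  rw [Set.mem_Icc, div_le_iff₀ hw, le_div_iff₀ hw, mul_comm (t * v), ← mul_assoc]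
  rcases ht.lt_or_gt with hneg | hpos
  · have hwt : w * t < 0 := mul_neg_of_pos_of_neg hw hneg
    rw [Real.sign_of_neg hneg] at hlo hhi
    rw [div_le_iff_of_neg hwt] at hlo
    rw [le_div_iff_of_neg hwt] at hhi
    constructor <;> linarith
  · have hwt : 0 < w * t := mul_pos hw hpos
    rw [Real.sign_of_pos hpos] at hlo hhi
    rw [div_le_iff₀ hwt] at hlo
    rw [le_div_iff₀ hwt] at hhi
    constructor <;> linarith

theorem stmt2_general (n : ℕ) (Tinv : Matrix (Fin n) (Fin n) ℝ)
    (Δ : ℝ) (u : Fin n → ℝ) (hu : ‖u‖ ≤ Δ)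
    (R : Fin n → Finset (Fin n)) (hR : ∀ j, R j = Finset.univ.filter (fun i => Tinv i j ≠ 0))
    (hRne : ∀ j, (R j).Nonempty)
    (w : Fin n → ℕ) (hw : ∀ i, w i = (Finset.univ.filter (fun j => Tinv i j ≠ 0)).card)
    (a b : Fin n → ℝ)
    (ha : ∀ j, a j =
      ((R j).image fun i => (-(Real.sign (Tinv i j)) * Δ - u i) / ((w i : ℝ) * Tinv i j)).max'
        ((hRne j).image _))
    (hb : ∀ j, b j =
      ((R j).image fun i => (Real.sign (Tinv i j) * Δ - u i) / ((w i : ℝ) * Tinv i j)).min'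
        ((hRne j).image _))
    (v : Fin n → ℝ) (hv : ∀ j, a j ≤ v j ∧ v j ≤ b j) :
    ‖u + Tinv.mulVec v‖ ≤ Δ := by
  rw [pi_norm_le_iff_of_nonneg ((norm_nonneg u).trans hu)]
  intro i
  rw [Pi.add_apply, Real.norm_eq_abs, abs_le, Matrix.mulVec_apply_eq_sum_filter_ne_zero]
  set S := univ.filter fun j => Tinv i j ≠ 0
  rcases S.eq_empty_or_nonempty with hS | hS
  · simpa [hS, abs_le] using (norm_le_pi_norm u i).trans hu
  have hterm : ∀ j ∈ S, Tinv i j * v j ∈ Set.Icc ((-Δ - u i) / #S) ((Δ - u i) / #S) := by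
    intro j hj
    have hij : Tinv i j ≠ 0 := (mem_filter.1 hj).2
    have hiR : i ∈ R j := by rw [hR]; exact mem_filter.2 ⟨mem_univ i, hij⟩
    have hwi : (0 : ℝ) < w i := by rw [hw i]; exact_mod_cast hS.card_pos
    rw [← Nat.cast_inj.2 (hw i)]
    refine mul_mem_Icc_of_sign_bounds hij hwi ?_ ?_
    · exact ((le_max' _ _ (mem_image_of_mem _ hiR)).trans_eq (ha j).symm).trans (hv j).1
    · exact (hv j).2.trans ((hb j).trans_le (min'_le _ _ (mem_image_of_mem _ hiR)))
  have hsum := sum_mem_Icc_of_forall_mem_Icc_div_card hS hterm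
  constructor <;> linarith [hsum.1, hsum.2]

/-- bound constraints in untransformed coordinates guarantee the
trust-region constraint in transformed coordinates.  Here `Tinv` plays the role of `T⁻¹`,
`‖·‖` on `Fin n → ℝ` is the max norm, and `Real.sign x = 1` for `x > 0`, `-1` for `x < 0`.
`w i` is the number of nonzero entries of row `i` and `R j` the set of rows with a nonzero
entry in column `j`; every column is assumed to contain a nonzero entry, and `‖u‖_∞ ≤ Δ`. -/
theorem stmt2 (n : ℕ) (Tinv : Matrix (Fin n) (Fin n) ℝ) (hTinv : IsUnit Tinv.det)
    (Δ : ℝ) (hΔ : 0 < Δ) (u : Fin n → ℝ) (hu : ‖u‖ ≤ Δ)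
    (R : Fin n → Finset (Fin n)) (hR : ∀ j, R j = Finset.univ.filter (fun i => Tinv i j ≠ 0))
    (hRne : ∀ j, (R j).Nonempty)
    (w : Fin n → ℕ) (hw : ∀ i, w i = (Finset.univ.filter (fun j => Tinv i j ≠ 0)).card)
    (a b : Fin n → ℝ)
    (ha : ∀ j, a j =
      ((R j).image fun i => (-(Real.sign (Tinv i j)) * Δ - u i) / ((w i : ℝ) * Tinv i j)).max'
        ((hRne j).image _))
    (hb : ∀ j, b j =
      ((R j).image fun i => (Real.sign (Tinv i j) * Δ - u i) / ((w i : ℝ) * Tinv i j)).min'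
        ((hRne j).image _))
    (v : Fin n → ℝ) (hv : ∀ j, a j ≤ v j ∧ v j ≤ b j) :
    ‖u + Tinv.mulVec v‖ ≤ Δ :=
  stmt2_general n Tinv Δ u hu R hR hRne w hw a b ha hb v hv
end

section
/- Let (J^k, θ^k)_{k∈ℕ} be a sequence of pairs in ℝ × ℝ_{≥0} and fix 0 < ξ < 1. Suppose each pair (J^{k+1}, θ^{k+1}) is acceptable to the previous pairs in the sense that for all i ≤ k: either J^{k+1} < J^i − ξ·θ^{k+1} or θ^{k+1} < (1−ξ)·θ^i. If additionally (J^k) is bounded below and θ^k > 0 for all k, then θ^k → 0 as k → ∞. -/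
/-!
Suppose `θ^k ≥ ε > 0` along a subsequence. For any two of its indices `i < k` the acceptance
condition forces `J^k ≤ J^i - ξε` or `θ^k ≤ θ^i - ξε`. Rounding `(J - C)/(ξε)` and `θ/(ξε)`
up to naturals, every later pair is strictly smaller in one coordinate than every earlier one,
which contradicts Dickson's lemma (`ℕ × ℕ` is well quasi-ordered).
-/

open Filter

lemma Nat.ceil_div_lt_ceil_div_of_add_le {x y c : ℝ} (hc : 0 < c) (hx : 0 ≤ x)
    (h : x + c ≤ y) : ⌈x / c⌉₊ < ⌈y / c⌉₊ := by
  have hdiv : x / c + 1 ≤ y / c := by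
    rw [div_add_one hc.ne']
    exact div_le_div_of_nonneg_right h hc.le
  calc ⌈x / c⌉₊ < ⌈x / c⌉₊ + 1 := Nat.lt_succ_self _
    _ = ⌈x / c + 1⌉₊ := (Nat.ceil_add_one (div_nonneg hx hc.le)).symm
    _ ≤ ⌈y / c⌉₊ := Nat.ceil_mono hdiv

lemma exists_lt_lt_add_and_lt_add {u v : ℕ → ℝ} {C D c : ℝ} (hc : 0 < c)
    (hu : ∀ n, C ≤ u n) (hv : ∀ n, D ≤ v n) :
    ∃ m n, m < n ∧ u m < u n + c ∧ v m < v n + c := by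
  obtain ⟨m, n, hmn, hle⟩ := wellQuasiOrdered_le
    (fun n ↦ (⌈(u n - C) / c⌉₊, ⌈(v n - D) / c⌉₊))
  refine ⟨m, n, hmn, ?_, ?_⟩
  · by_contra! h
    have := Nat.ceil_div_lt_ceil_div_of_add_le hc (sub_nonneg.2 (hu n))
      (show u n - C + c ≤ u m - C by linarith)
    exact this.not_ge hle.1
  · by_contra! h
    have := Nat.ceil_div_lt_ceil_div_of_add_le hc (sub_nonneg.2 (hv n))
      (show v n - D + c ≤ v m - D by linarith)
    exact this.not_ge hle.2

/-- filter convergence (Conn–Gould–Toint, Lemma 15.5.2).  If every new pair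
`(J^{k+1}, θ^{k+1})` is acceptable to all previous pairs, the energies are bounded below
and all infeasibilities are positive, then the infeasibility converges to zero. -/
theorem stmt6 (J θ : ℕ → ℝ) (ξ : ℝ) (hξ : 0 < ξ ∧ ξ < 1)
    (hθpos : ∀ k, 0 < θ k)
    (hbdd : ∃ C, ∀ k, C ≤ J k)
    (hacc : ∀ k, ∀ i ≤ k,
      J (k + 1) < J i - ξ * θ (k + 1) ∨ θ (k + 1) < (1 - ξ) * θ i) :
    Tendsto θ atTop (nhds 0) := by
  refine tendsto_order.2 ⟨fun a ha ↦ .of_forall fun n ↦ ha.trans (hθpos n), fun ε hε ↦ ?_⟩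
  by_contra hfreq
  simp only [not_eventually, not_lt] at hfreq
  obtain ⟨φ, hφ, hθφ⟩ := extraction_of_frequently_atTop hfreq
  obtain ⟨C, hC⟩ := hbdd
  obtain ⟨m, n, hmn, hJ, hθ⟩ := exists_lt_lt_add_and_lt_add (mul_pos hξ.1 hε)
    (fun n ↦ hC (φ n)) (fun n ↦ (hθpos (φ n)).le)
  have hlt : φ m < φ n := hφ hmn
  have hacc_mn := hacc (φ n - 1) (φ m) (by omega)
  rw [Nat.sub_add_cancel (by omega)] at hacc_mn
  have hθn : ξ * ε ≤ ξ * θ (φ n) := mul_le_mul_of_nonneg_left (hθφ n) hξ.1.le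
  have hθm : ξ * ε ≤ ξ * θ (φ m) := mul_le_mul_of_nonneg_left (hθφ m) hξ.1.le
  rcases hacc_mn with h | h <;> linarith
end
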